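/- arXiv:2310.09322 — 3 statements merged into one kernel-verified Lean document; each statement's English description precedes it below -/
import Mathlib

section
/- Along any solution of the OIM dynamics, the energy is nonincreasing: if θ : ℝ → ℝ^N is differentiable and satisfies θ'(t) = f(θ(t)) for all t, then for all t the derivative of t ↦ E(θ(t)) equals -2 ∑_i f_i(θ(t))², which is ≤ 0. -/
open Real Finset

/-- The OIM energy function
`E(θ) = -K ∑_{i,j, j≠i} W i j * cos (θ i - θ j) - K_s ∑ i, cos (2 θ i)`. -/
noncomputable def oimEnergy (N : ℕ) (K Ks : ℝ) (W : Fin N → Fin N → ℝ)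
    (θ : Fin N → ℝ) : ℝ :=
  -K * ∑ i, ∑ j ∈ Finset.univ.filter (fun j => j ≠ i), W i j * Real.cos (θ i - θ j)
    - Ks * ∑ i, Real.cos (2 * θ i)

/-- The OIM vector field `f i (θ) = -K ∑ j, W i j * sin (θ i - θ j) - K_s * sin (2 θ i)`. -/
noncomputable def oimField (N : ℕ) (K Ks : ℝ) (W : Fin N → Fin N → ℝ)
    (θ : Fin N → ℝ) (i : Fin N) : ℝ :=
  -K * ∑ j, W i j * Real.sin (θ i - θ j) - Ks * Real.sin (2 * θ i)

/-!
The OIM dynamics is a gradient flow: by the symmetry of `W`, `∂E/∂θᵢ = -2 fᵢ`, so along a solution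
the chain rule gives `d/dt E(θ(t)) = ∑ᵢ ∂E/∂θᵢ · fᵢ = -2 ∑ᵢ fᵢ²`.
-/

theorem sum_sum_mul_sub_of_antisymm {ι R : Type*} [Fintype ι] [CommRing R] (a : ι → ι → R)
    (ha : ∀ i j, a j i = -a i j) (x : ι → R) :
    ∑ i, ∑ j, a i j * (x i - x j) = 2 * ∑ i, ∑ j, a i j * x i := by
  have swap : ∑ i, ∑ j, a i j * x j = -∑ i, ∑ j, a i j * x i := by
    rw [sum_comm, ← sum_neg_distrib]
    refine sum_congr rfl fun i _ => ?_
    rw [← sum_neg_distrib]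
    exact sum_congr rfl fun j _ => by rw [ha]; ring
  simp only [mul_sub, sum_sub_distrib, swap]
  ring

theorem hasDerivAt_oimEnergy_comp {N : ℕ} {K Ks : ℝ} {W : Fin N → Fin N → ℝ}
    (hsym : ∀ i j, W i j = W j i) {θ : ℝ → Fin N → ℝ} {v : Fin N → ℝ} {t : ℝ}
    (hθ : HasDerivAt θ v t) :
    HasDerivAt (fun s => oimEnergy N K Ks W (θ s))
      (-2 * ∑ i, oimField N K Ks W (θ t) i * v i) t := by
  have hθi : ∀ i, HasDerivAt (fun s => θ s i) (v i) t := hasDerivAt_pi.mp hθ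
  have hE : HasDerivAt (fun s => oimEnergy N K Ks W (θ s))
      (-K * ∑ i, ∑ j ∈ univ.filter (fun j => j ≠ i),
          W i j * (-sin (θ t i - θ t j) * (v i - v j))
        - Ks * ∑ i, -sin (2 * θ t i) * (2 * v i)) t :=
    ((HasDerivAt.fun_sum fun i _ => HasDerivAt.fun_sum fun j _ =>
        (((hθi i).sub (hθi j)).cos).const_mul (W i j)).const_mul (-K)).sub
      ((HasDerivAt.fun_sum fun i _ => ((hθi i).const_mul 2).cos).const_mul Ks)
  refine hE.congr_deriv ?_
  have hoff_diag : ∀ i, ∑ j ∈ univ.filter (fun j => j ≠ i),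
      W i j * (-sin (θ t i - θ t j) * (v i - v j))
      = -∑ j, W i j * sin (θ t i - θ t j) * (v i - v j) := by
    intro i
    rw [sum_filter_of_ne fun j _ hj => ?_, ← sum_neg_distrib]
    · exact sum_congr rfl fun j _ => by ring
    · rintro rfl
      simp at hj
  have hantisymm : ∀ i j, W j i * sin (θ t j - θ t i) = -(W i j * sin (θ t i - θ t j)) := by
    intro i j
    rw [hsym j i, ← neg_sub, sin_neg, mul_neg]
  simp only [hoff_diag, sum_neg_distrib]
  rw [sum_sum_mul_sub_of_antisymm (fun i j => W i j * sin (θ t i - θ t j)) hantisymm]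
  have hfield : ∑ i, oimField N K Ks W (θ t) i * v i
      = -K * ∑ i, ∑ j, W i j * sin (θ t i - θ t j) * v i - Ks * ∑ i, sin (2 * θ t i) * v i := by
    simp only [oimField, sub_mul, sum_sub_distrib, mul_sum, sum_mul, mul_assoc]
  have hdouble : ∑ i, -sin (2 * θ t i) * (2 * v i) = -2 * ∑ i, sin (2 * θ t i) * v i := by
    rw [mul_sum]
    exact sum_congr rfl fun i _ => by ring
  rw [hfield, hdouble]
  ring

theorem oim_energy_derivative_along_solutions_general (N : ℕ) (K Ks : ℝ)
    (W : Fin N → Fin N → ℝ) (hsym : ∀ i j, W i j = W j i)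
    (θ : ℝ → Fin N → ℝ)
    (hθ : ∀ t, HasDerivAt θ (oimField N K Ks W (θ t)) t) (t : ℝ) :
    HasDerivAt (fun t => oimEnergy N K Ks W (θ t))
        (-2 * ∑ i, (oimField N K Ks W (θ t) i) ^ 2) t ∧
      -2 * ∑ i, (oimField N K Ks W (θ t) i) ^ 2 ≤ 0 := by
  refine ⟨?_, mul_nonpos_of_nonpos_of_nonneg (by norm_num) (sum_nonneg fun i _ => sq_nonneg _)⟩
  simpa only [sq] using hasDerivAt_oimEnergy_comp hsym (hθ t)

/-- along any solution of the OIM dynamics, the derivative of the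
energy equals `-2 ∑ i, f_i(θ(t))²`, which is nonpositive. -/
theorem oim_energy_derivative_along_solutions (N : ℕ) (hN : 1 ≤ N) (K Ks : ℝ)
    (W : Fin N → Fin N → ℝ) (hdiag : ∀ i, W i i = 0) (hsym : ∀ i j, W i j = W j i)
    (θ : ℝ → Fin N → ℝ)
    (hθ : ∀ t, HasDerivAt θ (oimField N K Ks W (θ t)) t) (t : ℝ) :
    HasDerivAt (fun t => oimEnergy N K Ks W (θ t))
        (-2 * ∑ i, (oimField N K Ks W (θ t) i) ^ 2) t ∧
      -2 * ∑ i, (oimField N K Ks W (θ t) i) ^ 2 ≤ 0 :=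
  oim_energy_derivative_along_solutions_general N K Ks W hsym θ hθ t
end

section
/- At any spin configuration θ (θ_i ∈ {0, π} for all i), setting s_i = cos(θ_i) ∈ {-1, +1}, the OIM energy equals an affine transform of the Ising Hamiltonian: E(θ) = 2K · H(s) - N · K_s, where H(s) = -∑_{i<j} W i j · s_i · s_j. -/
open Real Finset

/-- The Ising Hamiltonian `H(s) = -∑_{i<j} W i j * s i * s j`. -/
noncomputable def isingHamiltonian (N : ℕ) (W : Fin N → Fin N → ℝ)
    (s : Fin N → ℝ) : ℝ :=
  -∑ i, ∑ j ∈ Finset.univ.filter (fun j => i < j), W i j * s i * s j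

/-- at a spin configuration, with `s i = cos (θ i)`,
`E(θ) = 2 K * H(s) - N * K_s`. -/
theorem oim_energy_eq_ising_at_spin_configs (N : ℕ) (hN : 1 ≤ N) (K Ks : ℝ)
    (W : Fin N → Fin N → ℝ) (hdiag : ∀ i, W i i = 0) (hsym : ∀ i j, W i j = W j i)
    (θ : Fin N → ℝ) (hθ : ∀ i, θ i = 0 ∨ θ i = π) :
    oimEnergy N K Ks W θ
      = 2 * K * isingHamiltonian N W (fun i => Real.cos (θ i)) - N * Ks := by
  have hsin : ∀ i, Real.sin (θ i) = 0 := by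
    intro i; rcases hθ i with h | h <;> simp [h]
  have hcos2 : ∀ i, Real.cos (2 * θ i) = 1 := by
    intro i
    rw [Real.cos_two_mul, ← Real.sin_sq_add_cos_sq (θ i), hsin i]
    ring
  have hsub : ∀ i j, Real.cos (θ i - θ j) = Real.cos (θ i) * Real.cos (θ j) := by
    intro i j; rw [Real.cos_sub, hsin]; ring
  have key : ∑ i, ∑ j ∈ Finset.univ.filter (fun j => j ≠ i),
      W i j * Real.cos (θ i - θ j)
      = 2 * ∑ i, ∑ j ∈ Finset.univ.filter (fun j => i < j),
          W i j * Real.cos (θ i) * Real.cos (θ j) := by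
    have split : ∀ i : Fin N, (Finset.univ.filter (fun j => j ≠ i))
        = (Finset.univ.filter (fun j => i < j)) ∪ (Finset.univ.filter (fun j => j < i)) := by
      intro i
      ext j
      simp only [Finset.mem_union, Finset.mem_filter, Finset.mem_univ, true_and,
        ne_eq, Fin.lt_def, ← Fin.val_ne_iff]
      omega
    calc ∑ i, ∑ j ∈ Finset.univ.filter (fun j => j ≠ i), W i j * Real.cos (θ i - θ j)
        = ∑ i, (∑ j ∈ Finset.univ.filter (fun j => i < j), W i j * Real.cos (θ i - θ j)
          + ∑ j ∈ Finset.univ.filter (fun j => j < i), W i j * Real.cos (θ i - θ j)) := by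
          refine Finset.sum_congr rfl fun i _ => ?_
          rw [split i, Finset.sum_union]
          rw [Finset.disjoint_filter]
          intro j _ h1
          omega
      _ = ∑ i, ∑ j ∈ Finset.univ.filter (fun j => i < j), W i j * Real.cos (θ i - θ j)
          + ∑ i, ∑ j ∈ Finset.univ.filter (fun j => j < i), W i j * Real.cos (θ i - θ j) := by
          rw [Finset.sum_add_distrib]
      _ = 2 * ∑ i, ∑ j ∈ Finset.univ.filter (fun j => i < j),
            W i j * Real.cos (θ i) * Real.cos (θ j) := by
          have swap : ∑ i, ∑ j ∈ Finset.univ.filter (fun j => j < i),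
              W i j * Real.cos (θ i - θ j)
              = ∑ i, ∑ j ∈ Finset.univ.filter (fun j => i < j),
                  W i j * Real.cos (θ i - θ j) := by
            rw [Finset.sum_sigma', Finset.sum_sigma']
            apply Finset.sum_nbij' (fun p => ⟨p.2, p.1⟩) (fun p => ⟨p.2, p.1⟩)
            · intro p hp; simp at hp ⊢; exact hp
            · intro p hp; simp at hp ⊢; exact hp
            · intro p _; rfl
            · intro p _; rfl
            · intro p hp
              simp only
              rw [hsym, Real.cos_sub, Real.cos_sub]
              ring
          rw [swap]
          have : ∀ i, ∑ j ∈ Finset.univ.filter (fun j => i < j),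
              W i j * Real.cos (θ i - θ j)
              = ∑ j ∈ Finset.univ.filter (fun j => i < j),
                  W i j * Real.cos (θ i) * Real.cos (θ j) := by
            intro i
            refine Finset.sum_congr rfl fun j _ => ?_
            rw [hsub]; ring
          simp only [this]; ring
  simp only [oimEnergy, isingHamiltonian, key, hcos2]
  simp [Finset.sum_const, Finset.card_univ]
  ring
end

section
/- Assume K > 0. A spin configuration θ* (with θ*_i ∈ {0, π} for all i) minimizes the OIM energy E over all spin configurations if and only if the corresponding spin vector s* with s*_i = cos(θ*_i) minimizes the Ising Hamiltonian H over {-1, +1}^N. -/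
open Real Finset

/-- for `K > 0`, a spin configuration `θ*` minimizes `E` over spin
configurations iff the spin vector `s* i = cos (θ* i)` minimizes `H` over `{-1,+1}^N`. -/
theorem oim_energy_min_iff_ising_min (N : ℕ) (hN : 1 ≤ N) (K Ks : ℝ) (hK : 0 < K)
    (W : Fin N → Fin N → ℝ) (hdiag : ∀ i, W i i = 0) (hsym : ∀ i j, W i j = W j i)
    (θs : Fin N → ℝ) (hθs : ∀ i, θs i = 0 ∨ θs i = π) :
    (∀ θ : Fin N → ℝ, (∀ i, θ i = 0 ∨ θ i = π) →
        oimEnergy N K Ks W θs ≤ oimEnergy N K Ks W θ) ↔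
      (∀ s : Fin N → ℝ, (∀ i, s i = -1 ∨ s i = 1) →
        isingHamiltonian N W (fun i => Real.cos (θs i)) ≤ isingHamiltonian N W s) := by
  -- Key identity: for spin configurations, E(θ) = 2K·H(cos∘θ) - Ks·N
  have key : ∀ θ : Fin N → ℝ, (∀ i, θ i = 0 ∨ θ i = π) →
      oimEnergy N K Ks W θ = 2 * K * isingHamiltonian N W (fun i => Real.cos (θ i)) - Ks * N := by
    intro θ hθ
    have hsin : ∀ i, Real.sin (θ i) = 0 := by
      intro i; rcases hθ i with h | h <;> simp [h]
    have hcos2 : ∀ i, Real.cos (2 * θ i) = 1 := by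
      intro i; rcases hθ i with h | h <;> simp [h, Real.cos_two_pi]
    have hcossub : ∀ i j, Real.cos (θ i - θ j) = Real.cos (θ i) * Real.cos (θ j) := by
      intro i j; rw [Real.cos_sub, hsin, hsin]; ring
    unfold oimEnergy isingHamiltonian
    have h1 : ∀ i : Fin N,
        ∑ j ∈ Finset.univ.filter (fun j => j ≠ i), W i j * Real.cos (θ i - θ j)
          = ∑ j, W i j * (Real.cos (θ i) * Real.cos (θ j)) := by
      intro i
      rw [Finset.sum_filter]
      apply Finset.sum_congr rfl
      intro j _
      by_cases h : j = i
      · simp [h, hdiag]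
      · simp [h, hcossub]
    have h2 : (∑ i, ∑ j ∈ Finset.univ.filter (fun j => j ≠ i),
        W i j * Real.cos (θ i - θ j))
        = 2 * ∑ i, ∑ j ∈ Finset.univ.filter (fun j => i < j),
            W i j * Real.cos (θ i) * Real.cos (θ j) := by
      simp_rw [h1]
      set f : Fin N → Fin N → ℝ := fun i j => W i j * (Real.cos (θ i) * Real.cos (θ j)) with hf
      have hfsym : ∀ i j, f i j = f j i := by
        intro i j; simp only [hf]; rw [hsym]; ring
      have hsplit : ∀ i : Fin N, (∑ j, f i j)
          = (∑ j ∈ Finset.univ.filter (fun j => i < j), f i j)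
            + ∑ j ∈ Finset.univ.filter (fun j => j < i), f i j := by
        intro i
        rw [← Finset.sum_filter_add_sum_filter_not Finset.univ (fun j => i < j)]
        congr 1
        rw [Finset.sum_filter, Finset.sum_filter]
        apply Finset.sum_congr rfl
        intro j _
        rcases lt_trichotomy i j with h | h | h
        · simp [h, not_lt.mpr h.le]
        · simp [h, hf, hdiag]
        · simp [h, not_lt.mpr h.le]
      have hswap : (∑ i, ∑ j ∈ Finset.univ.filter (fun j => j < i), f i j)
          = ∑ i, ∑ j ∈ Finset.univ.filter (fun j => i < j), f i j := by
        rw [Finset.sum_comm' (s' := fun j => Finset.univ.filter (fun i => j < i))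
          (t' := Finset.univ)]
        · apply Finset.sum_congr rfl
          intro j _
          apply Finset.sum_congr rfl
          intro i _
          exact hfsym _ _
        · intro i j; simp
      rw [Finset.sum_congr rfl (fun i _ => hsplit i), Finset.sum_add_distrib, hswap]
      have : ∀ i j, f i j = W i j * Real.cos (θ i) * Real.cos (θ j) := by
        intro i j; simp [hf]; ring
      simp_rw [this]; ring
    rw [h2]
    simp_rw [hcos2]
    simp [Finset.card_univ]
    ring
  -- build θ from s
  have build : ∀ s : Fin N → ℝ, (∀ i, s i = -1 ∨ s i = 1) →
      ∃ θ : Fin N → ℝ, (∀ i, θ i = 0 ∨ θ i = π) ∧ ∀ i, Real.cos (θ i) = s i := by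
    intro s hs
    refine ⟨fun i => if s i = 1 then 0 else π, fun i => ?_, fun i => ?_⟩
    · by_cases h : s i = 1 <;> simp [h]
    · by_cases h : s i = 1 <;> rcases hs i with h' | h' <;> simp_all
  constructor
  · intro hmin s hs
    obtain ⟨θ, hθ, hcs⟩ := build s hs
    have := hmin θ hθ
    rw [key θs hθs, key θ hθ] at this
    have hH : isingHamiltonian N W (fun i => Real.cos (θ i)) = isingHamiltonian N W s := by
      unfold isingHamiltonian; simp_rw [hcs]
    rw [hH] at this
    nlinarith
  · intro hmin θ hθ
    have hs : ∀ i, Real.cos (θ i) = -1 ∨ Real.cos (θ i) = 1 := by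
      intro i; rcases hθ i with h | h <;> simp [h]
    have := hmin (fun i => Real.cos (θ i)) hs
    rw [key θs hθs, key θ hθ]
    nlinarith
end
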